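/- For every ε ∈ (0, p-1) there exists C(ε) > 0 such that for all s ≥ 1 and all z ∈ ℝ, |z|^{p-ε} ≤ C e^{-ps/(p-1)} s^{a/(p-1)} |f(φ(s) z)| + C(ε). -/
import Mathlib

open Real Filter MeasureTheory

noncomputable def f6 (p a u : ℝ) : ℝ := |u| ^ (p - 1) * u * Real.log (2 + u ^ 2) ^ a

noncomputable def phi6 (p a s : ℝ) : ℝ := Real.exp (s / (p - 1)) * s ^ (-(a / (p - 1)))

lemma aux_log_le {c s : ℝ} (hc : 0 < c) (hs : 0 < s) : Real.log s ≤ s / c + Real.log c := by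
  have h := Real.log_le_sub_one_of_pos (show 0 < s / c by positivity)
  rw [Real.log_div (ne_of_gt hs) (ne_of_gt hc)] at h
  linarith

lemma aux_lower (p a : ℝ) (hp : 1 < p) : ∃ c > 0, ∀ s ≥ (1:ℝ), ∀ z : ℝ, 1 ≤ |z| →
    c * s ≤ Real.log (2 + (phi6 p a s * z) ^ 2) := by
  have hq : 0 < p - 1 := by linarith
  set A := max a 0 with hA
  have hA0 : 0 ≤ A := le_max_right _ _
  set D := A * Real.log (2 * A + 1) with hD
  have hD0 : 0 ≤ D := mul_nonneg hA0 (Real.log_nonneg (by linarith))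
  refine ⟨min (1 / (2 * (p - 1))) (Real.log 2 / (4 * D + 1)), ?_, ?_⟩
  · apply lt_min
    · positivity
    · have : 0 < Real.log 2 := Real.log_pos (by norm_num)
      positivity
  intro s hs z hz
  have hs0 : 0 < s := by linarith
  have hz0 : z ≠ 0 := by
    intro h; rw [h, abs_zero] at hz; linarith
  have hφ : 0 < phi6 p a s := by
    unfold phi6
    positivity
  have hu : phi6 p a s * z ≠ 0 := mul_ne_zero (ne_of_gt hφ) hz0
  have hu2 : 0 < (phi6 p a s * z) ^ 2 := by positivity
  set L := Real.log (2 + (phi6 p a s * z) ^ 2) with hL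
  have h1 : Real.log 2 ≤ L := Real.log_le_log (by norm_num) (by nlinarith)
  have h2 : Real.log ((phi6 p a s * z) ^ 2) ≤ L :=
    Real.log_le_log hu2 (by nlinarith)
  have h3 : Real.log ((phi6 p a s * z) ^ 2) = 2 * (Real.log (phi6 p a s) + Real.log z) := by
    rw [Real.log_pow, Real.log_mul (ne_of_gt hφ) hz0]
    push_cast; ring
  have h4 : Real.log (phi6 p a s) = s / (p - 1) - (a / (p - 1)) * Real.log s := by
    unfold phi6
    rw [Real.log_mul (ne_of_gt (Real.exp_pos _)) (ne_of_gt (Real.rpow_pos_of_pos hs0 _)),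
      Real.log_exp, Real.log_rpow hs0]
    ring
  have hlogz : 0 ≤ Real.log z := by
    rw [← Real.log_abs]; exact Real.log_nonneg hz
  have hlogs : 0 ≤ Real.log s := Real.log_nonneg hs
  -- a * log s ≤ s/2 + D
  have h5 : a * Real.log s ≤ s / 2 + D := by
    have hb1 : a * Real.log s ≤ A * Real.log s :=
      mul_le_mul_of_nonneg_right (le_max_left _ _) hlogs
    have hb2 : Real.log s ≤ s / (2 * A + 1) + Real.log (2 * A + 1) :=
      aux_log_le (by linarith) hs0
    have hb3 : A * Real.log s ≤ A * (s / (2 * A + 1)) + D := by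
      rw [hD]; nlinarith
    have hb4 : A * (s / (2 * A + 1)) ≤ s / 2 := by
      rw [mul_div_assoc', div_le_div_iff₀ (by linarith) (by norm_num)]
      nlinarith
    linarith
  -- L ≥ (s - 2 D)/(p-1)
  have h6 : (s - 2 * D) / (p - 1) ≤ L := by
    have : (s - 2 * D) / (p - 1) ≤ 2 * (s / (p - 1) - (a / (p - 1)) * Real.log s) := by
      have e1 : 2 * (s / (p - 1) - (a / (p - 1)) * Real.log s)
          = (2 * (s - a * Real.log s)) / (p - 1) := by ring
      rw [e1, div_le_div_iff₀ hq hq]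
      nlinarith
    calc (s - 2 * D) / (p - 1) ≤ 2 * (Real.log (phi6 p a s) + Real.log z) := by
          rw [h4]; linarith
      _ ≤ L := by rw [← h3]; exact h2
  rcases le_total s (4 * D) with hcase | hcase
  · calc min (1 / (2 * (p - 1))) (Real.log 2 / (4 * D + 1)) * s
        ≤ Real.log 2 / (4 * D + 1) * s := by
          apply mul_le_mul_of_nonneg_right (min_le_right _ _) (le_of_lt hs0)
      _ ≤ Real.log 2 := by
          rw [div_mul_eq_mul_div, div_le_iff₀ (by linarith)]
          have : 0 < Real.log 2 := Real.log_pos (by norm_num)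
          nlinarith
      _ ≤ L := h1
  · calc min (1 / (2 * (p - 1))) (Real.log 2 / (4 * D + 1)) * s
        ≤ 1 / (2 * (p - 1)) * s := by
          apply mul_le_mul_of_nonneg_right (min_le_left _ _) (le_of_lt hs0)
      _ ≤ (s - 2 * D) / (p - 1) := by
          have e1 : 1 / (2 * (p - 1)) * s = s / (2 * (p - 1)) := by ring
          rw [e1, div_le_div_iff₀ (by linarith) hq]
          nlinarith
      _ ≤ L := h6

lemma aux_upper (p a : ℝ) (hp : 1 < p) : ∀ s ≥ (1:ℝ), ∀ z : ℝ,
    Real.log (2 + (phi6 p a s * z) ^ 2)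
      ≤ (2 * (1 + |a|) / (p - 1)) * s + Real.log (2 + z ^ 2) := by
  have hq : 0 < p - 1 := by linarith
  intro s hs z
  have hs0 : 0 < s := by linarith
  have hls : Real.log s ≤ s := by linarith [Real.log_le_sub_one_of_pos hs0]
  have hlogs : 0 ≤ Real.log s := Real.log_nonneg hs
  have hφ2 : (phi6 p a s) ^ 2 ≤ Real.exp ((2 * (1 + |a|) / (p - 1)) * s) := by
    unfold phi6
    rw [mul_pow, ← Real.exp_nat_mul, ← Real.rpow_natCast (s ^ (-(a / (p - 1)))) 2,
      ← Real.rpow_mul (le_of_lt hs0), Real.rpow_def_of_pos hs0, ← Real.exp_add]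
    apply Real.exp_le_exp.2
    have hc : -(a / (p - 1)) * (2:ℕ) ≤ |a| / (p - 1) * 2 := by
      push_cast
      have h1 : -a ≤ |a| := neg_le_abs a
      have h2 : -a / (p - 1) ≤ |a| / (p - 1) := by
        apply div_le_div_of_nonneg_right h1 (le_of_lt hq)
      rw [neg_div] at h2
      linarith
    have hc0 : (0:ℝ) ≤ |a| / (p - 1) * 2 := by positivity
    have h3 : Real.log s * (-(a / (p - 1)) * (2:ℕ)) ≤ Real.log s * (|a| / (p - 1) * 2) :=
      mul_le_mul_of_nonneg_left hc hlogs
    have h4 : Real.log s * (|a| / (p - 1) * 2) ≤ s * (|a| / (p - 1) * 2) :=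
      mul_le_mul_of_nonneg_right hls hc0
    have : ((2:ℕ) : ℝ) * (s / (p - 1)) + s * (|a| / (p - 1) * 2)
        = 2 * (1 + |a|) / (p - 1) * s := by push_cast; ring
    linarith
  have hK0 : 0 ≤ 2 * (1 + |a|) / (p - 1) * s := by positivity
  have he1 : 1 ≤ Real.exp (2 * (1 + |a|) / (p - 1) * s) := Real.one_le_exp hK0
  have h2 : 2 + (phi6 p a s * z) ^ 2
      ≤ Real.exp (2 * (1 + |a|) / (p - 1) * s) * (2 + z ^ 2) := by
    have e1 : (phi6 p a s * z) ^ 2 = (phi6 p a s) ^ 2 * z ^ 2 := by ring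
    rw [e1]
    nlinarith [sq_nonneg z, mul_le_mul_of_nonneg_right hφ2 (sq_nonneg z)]
  calc Real.log (2 + (phi6 p a s * z) ^ 2)
      ≤ Real.log (Real.exp (2 * (1 + |a|) / (p - 1) * s) * (2 + z ^ 2)) :=
        Real.log_le_log (by positivity) h2
    _ = 2 * (1 + |a|) / (p - 1) * s + Real.log (2 + z ^ 2) := by
        rw [Real.log_mul (ne_of_gt (Real.exp_pos _)) (by positivity), Real.log_exp]

lemma aux_growth (K ε b : ℝ) (hK : 0 ≤ K) (hε : 0 < ε) (hb : 0 ≤ b) :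
    ∃ M > 0, ∀ t : ℝ, 1 ≤ t → (K + Real.log (2 + t ^ 2)) ^ b ≤ M * t ^ ε := by
  set δ := ε / (2 * (b + 1)) with hδ
  have hδ0 : 0 < δ := by positivity
  refine ⟨((K + 1 / δ) * 3 ^ δ) ^ b, by positivity, ?_⟩
  intro t ht
  have ht0 : 0 < t := by linarith
  have h1 : K + Real.log (2 + t ^ 2) ≤ (K + 1 / δ) * (2 + t ^ 2) ^ δ := by
    have hl : Real.log (2 + t ^ 2) ≤ (2 + t ^ 2) ^ δ / δ :=
      Real.log_le_rpow_div (by positivity) hδ0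
    have hg1 : (1:ℝ) ≤ (2 + t ^ 2) ^ δ :=
      Real.one_le_rpow (by nlinarith) (le_of_lt hδ0)
    have : K * 1 ≤ K * (2 + t ^ 2) ^ δ := mul_le_mul_of_nonneg_left hg1 hK
    have e1 : (2 + t ^ 2) ^ δ / δ = 1 / δ * (2 + t ^ 2) ^ δ := by ring
    rw [e1] at hl
    nlinarith
  have h2 : (2 + t ^ 2) ^ δ ≤ 3 ^ δ * t ^ (2 * δ) := by
    have e1 : (3:ℝ) ^ δ * t ^ (2 * δ) = (3 * t ^ 2) ^ δ := by
      rw [Real.mul_rpow (by norm_num) (by positivity)]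
      congr 1
      rw [← Real.rpow_natCast t 2, ← Real.rpow_mul (le_of_lt ht0)]
      norm_num [mul_comm]
    rw [e1]
    apply Real.rpow_le_rpow (by positivity) (by nlinarith) (le_of_lt hδ0)
  have h3 : K + Real.log (2 + t ^ 2) ≤ (K + 1 / δ) * 3 ^ δ * t ^ (2 * δ) := by
    calc K + Real.log (2 + t ^ 2) ≤ (K + 1 / δ) * (2 + t ^ 2) ^ δ := h1
      _ ≤ (K + 1 / δ) * (3 ^ δ * t ^ (2 * δ)) :=
          mul_le_mul_of_nonneg_left h2 (by positivity)
      _ = (K + 1 / δ) * 3 ^ δ * t ^ (2 * δ) := by ring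
  have h0 : 0 ≤ K + Real.log (2 + t ^ 2) := by
    have : (0:ℝ) ≤ Real.log (2 + t ^ 2) := Real.log_nonneg (by nlinarith)
    linarith
  calc (K + Real.log (2 + t ^ 2)) ^ b ≤ ((K + 1 / δ) * 3 ^ δ * t ^ (2 * δ)) ^ b :=
        Real.rpow_le_rpow h0 h3 hb
    _ = ((K + 1 / δ) * 3 ^ δ) ^ b * (t ^ (2 * δ)) ^ b := by
        rw [Real.mul_rpow (by positivity) (by positivity)]
    _ = ((K + 1 / δ) * 3 ^ δ) ^ b * t ^ (2 * δ * b) := by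
        rw [← Real.rpow_mul (le_of_lt ht0)]
    _ ≤ ((K + 1 / δ) * 3 ^ δ) ^ b * t ^ ε := by
        apply mul_le_mul_of_nonneg_left _ (by positivity)
        apply Real.rpow_le_rpow_of_exponent_le ht
        rw [hδ]
        have e2 : 2 * (ε / (2 * (b + 1))) * b = ε * (2 * b) / (2 * (b + 1)) := by ring
        rw [e2, div_le_iff₀ (by positivity)]
        nlinarith

lemma aux_ident (p a : ℝ) (hp : 1 < p) (s : ℝ) (hs : 1 ≤ s) (z : ℝ) (hz : z ≠ 0) :
    Real.exp (-(p * s) / (p - 1)) * s ^ (a / (p - 1)) * |f6 p a (phi6 p a s * z)|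
      = |z| ^ p * (s ^ (-a) * Real.log (2 + (phi6 p a s * z) ^ 2) ^ a) := by
  have hq : 0 < p - 1 := by linarith
  have hs0 : 0 < s := by linarith
  have hφ : 0 < phi6 p a s := by unfold phi6; positivity
  have hu : phi6 p a s * z ≠ 0 := mul_ne_zero (ne_of_gt hφ) hz
  have hau : 0 < |phi6 p a s * z| := abs_pos.2 hu
  have hL : 0 < Real.log (2 + (phi6 p a s * z) ^ 2) := by
    apply Real.log_pos
    nlinarith [sq_nonneg (phi6 p a s * z)]
  have hf : |f6 p a (phi6 p a s * z)|
      = |phi6 p a s * z| ^ p * Real.log (2 + (phi6 p a s * z) ^ 2) ^ a := by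
    unfold f6
    rw [abs_mul, abs_mul, abs_of_nonneg (Real.rpow_nonneg (abs_nonneg _) _),
      abs_of_pos (Real.rpow_pos_of_pos hL a)]
    have : |phi6 p a s * z| ^ (p - 1) * |phi6 p a s * z| = |phi6 p a s * z| ^ p := by
      nth_rewrite 2 [← Real.rpow_one |phi6 p a s * z|]
      rw [← Real.rpow_add hau]
      norm_num
    rw [this]
  rw [hf, abs_mul, abs_of_pos hφ, Real.mul_rpow (le_of_lt hφ) (abs_nonneg z)]
  have hφp : (phi6 p a s) ^ p
      = Real.exp (p * s / (p - 1)) * s ^ (-(a / (p - 1)) * p) := by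
    unfold phi6
    rw [Real.mul_rpow (le_of_lt (Real.exp_pos _)) (Real.rpow_nonneg (le_of_lt hs0) _),
      ← Real.exp_mul, ← Real.rpow_mul (le_of_lt hs0)]
    congr 1
    ring
  rw [hφp]
  have he : Real.exp (-(p * s) / (p - 1)) * Real.exp (p * s / (p - 1)) = 1 := by
    rw [← Real.exp_add]
    have e3 : -(p * s) / (p - 1) + p * s / (p - 1) = 0 := by ring
    rw [e3, Real.exp_zero]
  have hse : s ^ (a / (p - 1)) * s ^ (-(a / (p - 1)) * p) = s ^ (-a) := by
    rw [← Real.rpow_add hs0]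
    congr 1
    field_simp
    ring
  calc Real.exp (-(p * s) / (p - 1)) * s ^ (a / (p - 1)) *
        (Real.exp (p * s / (p - 1)) * s ^ (-(a / (p - 1)) * p) * |z| ^ p *
          Real.log (2 + (phi6 p a s * z) ^ 2) ^ a)
      = (Real.exp (-(p * s) / (p - 1)) * Real.exp (p * s / (p - 1))) *
        (s ^ (a / (p - 1)) * s ^ (-(a / (p - 1)) * p)) *
        (|z| ^ p * Real.log (2 + (phi6 p a s * z) ^ 2) ^ a) := by ring
    _ = |z| ^ p * (s ^ (-a) * Real.log (2 + (phi6 p a s * z) ^ 2) ^ a) := by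
        rw [he, hse]; ring

theorem stmt6 (p a : ℝ) (hp : 1 < p) :
    ∀ ε ∈ Set.Ioo (0:ℝ) (p - 1), ∃ C > 0, ∀ s ≥ (1:ℝ), ∀ z : ℝ,
      |z| ^ (p - ε)
        ≤ C * (Real.exp (-(p * s) / (p - 1)) * s ^ (a / (p - 1)) *
            |f6 p a (phi6 p a s * z)|) + C := by
  rintro ε ⟨hε0, hε1⟩
  have hq : 0 < p - 1 := by linarith
  obtain ⟨c, hc, hlow⟩ := aux_lower p a hp
  obtain ⟨M, hM, hgrow⟩ :=
    aux_growth (2 * (1 + |a|) / (p - 1)) ε |a| (by positivity) hε0 (abs_nonneg a)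
  have hC0pos : 0 < c ^ (-a) + M := by
    have := Real.rpow_pos_of_pos hc (-a); linarith
  refine ⟨c ^ (-a) + M + 1, by linarith, ?_⟩
  intro s hs z
  have hs0 : 0 < s := by linarith
  have hφ : 0 < phi6 p a s := by unfold phi6; positivity
  have hterm : 0 ≤ Real.exp (-(p * s) / (p - 1)) * s ^ (a / (p - 1)) *
      |f6 p a (phi6 p a s * z)| := by positivity
  rcases le_or_gt (|z|) 1 with hcase | hcase
  · have h1 : |z| ^ (p - ε) ≤ 1 := Real.rpow_le_one (abs_nonneg z) hcase (by linarith)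
    have h2 : 0 ≤ (c ^ (-a) + M + 1) * (Real.exp (-(p * s) / (p - 1)) * s ^ (a / (p - 1)) *
        |f6 p a (phi6 p a s * z)|) := mul_nonneg (by linarith) hterm
    linarith
  · have hz1 : 1 ≤ |z| := le_of_lt hcase
    have hz0 : z ≠ 0 := by
      intro h; rw [h, abs_zero] at hz1; linarith
    have hLlow := hlow s hs z hz1
    have hL0 : 0 < Real.log (2 + (phi6 p a s * z) ^ 2) :=
      lt_of_lt_of_le (by positivity) hLlow
    have hx0 : 0 < Real.log (2 + (phi6 p a s * z) ^ 2) / s := div_pos hL0 hs0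
    have hcx : c ≤ Real.log (2 + (phi6 p a s * z) ^ 2) / s :=
      (le_div_iff₀ hs0).2 hLlow
    have hlz : 0 ≤ Real.log (2 + z ^ 2) := Real.log_nonneg (by nlinarith [sq_nonneg z])
    have hxup : Real.log (2 + (phi6 p a s * z) ^ 2) / s
        ≤ 2 * (1 + |a|) / (p - 1) + Real.log (2 + z ^ 2) := by
      have h := aux_upper p a hp s hs z
      have h2 : Real.log (2 + (phi6 p a s * z) ^ 2) / s
          ≤ (2 * (1 + |a|) / (p - 1) * s + Real.log (2 + z ^ 2)) / s :=
        div_le_div_of_nonneg_right h (le_of_lt hs0)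
      have h3 : (2 * (1 + |a|) / (p - 1) * s + Real.log (2 + z ^ 2)) / s
          = 2 * (1 + |a|) / (p - 1) + Real.log (2 + z ^ 2) / s := by
        field_simp
      have h4 : Real.log (2 + z ^ 2) / s ≤ Real.log (2 + z ^ 2) := div_le_self hlz hs
      rw [h3] at h2
      linarith
    have hzε : 1 ≤ |z| ^ ε := Real.one_le_rpow hz1 (le_of_lt hε0)
    have hkey : (Real.log (2 + (phi6 p a s * z) ^ 2) / s) ^ (-a)
        ≤ (c ^ (-a) + M) * |z| ^ ε := by
      rcases le_total a 0 with ha | ha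
      · calc (Real.log (2 + (phi6 p a s * z) ^ 2) / s) ^ (-a)
            = (Real.log (2 + (phi6 p a s * z) ^ 2) / s) ^ |a| := by
              rw [abs_of_nonpos ha]
          _ ≤ (2 * (1 + |a|) / (p - 1) + Real.log (2 + z ^ 2)) ^ |a| :=
              Real.rpow_le_rpow (le_of_lt hx0) hxup (abs_nonneg a)
          _ ≤ M * |z| ^ ε := by
              have := hgrow |z| hz1
              rwa [sq_abs] at this
          _ ≤ (c ^ (-a) + M) * |z| ^ ε := by
              apply mul_le_mul_of_nonneg_right _ (by positivity)
              have := Real.rpow_pos_of_pos hc (-a); linarith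
      · have h1 : (Real.log (2 + (phi6 p a s * z) ^ 2) / s) ^ (-a) ≤ c ^ (-a) :=
          Real.rpow_le_rpow_of_nonpos hc hcx (by linarith)
        calc (Real.log (2 + (phi6 p a s * z) ^ 2) / s) ^ (-a) ≤ c ^ (-a) := h1
          _ = c ^ (-a) * 1 := (mul_one _).symm
          _ ≤ (c ^ (-a) + M) * |z| ^ ε :=
              mul_le_mul (by linarith) hzε zero_le_one (by linarith)
    have hone : 1 ≤ (c ^ (-a) + M) * |z| ^ ε *
        (Real.log (2 + (phi6 p a s * z) ^ 2) / s) ^ a := by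
      have hxa : 0 < (Real.log (2 + (phi6 p a s * z) ^ 2) / s) ^ a :=
        Real.rpow_pos_of_pos hx0 a
      have h := mul_le_mul_of_nonneg_right hkey (le_of_lt hxa)
      rwa [← Real.rpow_add hx0, neg_add_cancel, Real.rpow_zero] at h
    have hz0' : 0 < |z| := by linarith
    have hmain : |z| ^ (p - ε) ≤ (c ^ (-a) + M) *
        (|z| ^ p * (Real.log (2 + (phi6 p a s * z) ^ 2) / s) ^ a) := by
      have h := mul_le_mul_of_nonneg_left hone (Real.rpow_nonneg (abs_nonneg z) (p - ε))
      rw [mul_one] at h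
      calc |z| ^ (p - ε)
          ≤ |z| ^ (p - ε) * ((c ^ (-a) + M) * |z| ^ ε *
              (Real.log (2 + (phi6 p a s * z) ^ 2) / s) ^ a) := h
        _ = (c ^ (-a) + M) * ((|z| ^ (p - ε) * |z| ^ ε) *
              (Real.log (2 + (phi6 p a s * z) ^ 2) / s) ^ a) := by ring
        _ = (c ^ (-a) + M) * (|z| ^ p *
              (Real.log (2 + (phi6 p a s * z) ^ 2) / s) ^ a) := by
            rw [← Real.rpow_add hz0']
            norm_num
    have hxa2 : (Real.log (2 + (phi6 p a s * z) ^ 2) / s) ^ a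
        = s ^ (-a) * Real.log (2 + (phi6 p a s * z) ^ 2) ^ a := by
      rw [Real.div_rpow (le_of_lt hL0) (le_of_lt hs0), Real.rpow_neg (le_of_lt hs0),
        div_eq_mul_inv, mul_comm]
    rw [hxa2, ← aux_ident p a hp s hs z hz0] at hmain
    have hfinal : (c ^ (-a) + M) * (Real.exp (-(p * s) / (p - 1)) * s ^ (a / (p - 1)) *
          |f6 p a (phi6 p a s * z)|)
        ≤ (c ^ (-a) + M + 1) * (Real.exp (-(p * s) / (p - 1)) * s ^ (a / (p - 1)) *
          |f6 p a (phi6 p a s * z)|) + (c ^ (-a) + M + 1) := by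
      nlinarith [hterm]
    linarith
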